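/- Let m, n be nonzero integers with |m| ≠ |n|. Then in BS(m,n), the cyclic subgroup ⟨t⟩ generated by the stable letter t is malnormal: for every g ∈ BS(m,n), if g⟨t⟩g⁻¹ ∩ ⟨t⟩ contains a nontrivial element, then g ∈ ⟨t⟩. -/

import Mathlib

/-- The single defining relator `t a^m t⁻¹ (a^n)⁻¹` of the Baumslag–Solitar group `BS(m,n)`,
as an element of the free group on `Bool`, where `false` stands for the generator `a` and
`true` for the generator `t`. -/
def bsRel (m n : ℤ) : FreeGroup Bool :=
  FreeGroup.of true * FreeGroup.of false ^ m * (FreeGroup.of true)⁻¹ *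
    (FreeGroup.of false ^ n)⁻¹

/-- The Baumslag–Solitar group `BS(m,n) = ⟨a, t ∣ t a^m t⁻¹ = a^n⟩`. -/
abbrev BS (m n : ℤ) : Type := PresentedGroup ({bsRel m n} : Set (FreeGroup Bool))

/-- The generator `a` of `BS(m,n)`. -/
def BS.a (m n : ℤ) : BS m n := PresentedGroup.of false

/-- The generator `t` (stable letter) of `BS(m,n)`. -/
def BS.t (m n : ℤ) : BS m n := PresentedGroup.of true

/-- The `a`-line through `g` in `BS(m,n)`: the left coset `g⟨a⟩`. -/
def aLine (m n : ℤ) (g : BS m n) : Set (BS m n) := {x | ∃ i : ℤ, x = g * BS.a m n ^ i}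

/-- The `t`-line through `g` in `BS(m,n)`: the left coset `g⟨t⟩`. -/
def tLine (m n : ℤ) (g : BS m n) : Set (BS m n) := {x | ∃ i : ℤ, x = g * BS.t m n ^ i}

/-- A standard line in `BS(m,n)` is an `a`-line or a `t`-line. -/
def IsStandardLine (m n : ℤ) (ℓ : Set (BS m n)) : Prop :=
  (∃ g, ℓ = aLine m n g) ∨ (∃ g, ℓ = tLine m n g)

/-- A map `BS(m,n) → BS(m',n')` is line-preserving if the image of every standard line is a
standard line. -/
def LinePreserving {m n m' n' : ℤ} (φ : BS m n → BS m' n') : Prop :=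
  ∀ ℓ : Set (BS m n), IsStandardLine m n ℓ → IsStandardLine m' n' (φ '' ℓ)

/-!
`BS(m,n)` is the HNN extension of `ℤ` along `mℤ ≃ nℤ`, so it suffices to show that in this HNN
extension every `h` commuting with some `t ^ K`, `K > 0`, is a power of `t` (conjugating `t ^ k`
into `⟨t⟩` forces the exponent to be kept, by the `t`-degree). Induct on the length of the normal
form of `h`. If `t h t⁻¹` is reduced as written, so is `t ^ K h t ^ (-K)`; it equals `h` but is
`2K` letters longer, contradicting the uniqueness of the length of reduced words. Otherwise `h`
starts with a letter `t⁻¹` that cancels against `t` or ends with a letter `t`, and peeling it off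
shortens `h`. For an `h = a ^ c` of length zero, use the action of `BS(m,n)` on `ℚ` in which `a`
translates by `1` and `t` multiplies by `n / m`: there `t ^ K a ^ c t ^ (-K)` translates by
`(n / m) ^ K c`, which is `c` only for `c = 0` as `|m| ≠ |n|`.
-/

namespace HNNExtension

variable {G : Type*} [Group G] {A B : Subgroup G} {φ : A ≃* B}

noncomputable def tDegree : HNNExtension G A B φ →* Multiplicative ℤ :=
  lift 1 (Multiplicative.ofAdd 1) (by simp)

theorem eq_of_conj_t_zpow {h : HNNExtension G A B φ} {k l : ℤ}
    (e : h⁻¹ * t ^ k * h = t ^ l) : k = l := by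
  have := congrArg tDegree e
  simp only [map_mul, map_inv, map_zpow, tDegree, lift_t] at this
  rw [mul_comm, ← mul_assoc, mul_inv_cancel, one_mul] at this
  simpa using congrArg Multiplicative.toAdd this

namespace NormalWord

theorem exists_transversalPair_one_mem :
    ∃ d : TransversalPair G A B, ∀ u, (1 : G) ∈ d.set u := by
  choose s hs using fun u ↦ (toSubgroup A B u).exists_isComplement_right 1
  exact ⟨⟨s, fun u ↦ (hs u).1⟩, fun u ↦ (hs u).2⟩

theorem TransversalPair.eq_one_of_mem {d : TransversalPair G A B} {u : ℤˣ} {g : G}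
    (h1 : (1 : G) ∈ d.set u) (hA : g ∈ toSubgroup A B u) (hd : g ∈ d.set u) : g = 1 := by
  have h := (d.compl u).equiv_snd_eq_one_of_mem_of_one_mem h1 hA
  rw [(d.compl u).equiv_snd_eq_self_of_mem_of_one_mem (one_mem _) hd] at h
  exact congrArg Subtype.val h

namespace ReducedWord

/-- The word `t * w * t⁻¹`, spelled out letter by letter, is reduced. -/
def ConjTReduced (w : ReducedWord G A B) : Prop :=
  ((1, w.head) :: w.toList ++ [(-1, 1)]).IsChain
    (fun a b : ℤˣ × G => a.2 ∈ toSubgroup A B a.1 → a.1 = b.1)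

def conjT (w : ReducedWord G A B) (hw : w.ConjTReduced) : ReducedWord G A B :=
  ⟨1, (1, w.head) :: w.toList ++ [(-1, 1)], hw⟩

theorem prod_conjT (w : ReducedWord G A B) (hw : w.ConjTReduced) :
    (w.conjT hw).prod φ = t * w.prod φ * t⁻¹ := by
  simp [conjT, ReducedWord.prod, mul_assoc]

theorem conjTReduced_conjT (w : ReducedWord G A B) (hw : w.ConjTReduced) :
    (w.conjT hw).ConjTReduced := by
  refine List.IsChain.cons (hw.append (List.isChain_singleton _) ?_) ?_
  · simp [List.getLast?_cons]
  · simp [conjT]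

theorem exists_prod_eq_t_pow_conj (w : ReducedWord G A B) (hw : w.ConjTReduced) (K : ℕ) :
    ∃ w' : ReducedWord G A B, w'.ConjTReduced ∧ w'.prod φ = t ^ K * w.prod φ * (t ^ K)⁻¹ ∧
      w'.toList.length = w.toList.length + 2 * K := by
  induction K with
  | zero => exact ⟨w, hw, by simp, rfl⟩
  | succ K ih =>
    obtain ⟨w', hw', hprod, hlen⟩ := ih
    refine ⟨w'.conjT hw', w'.conjTReduced_conjT hw', ?_, ?_⟩
    · rw [prod_conjT, hprod]
      group
    · simp [conjT, hlen]
      ring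

theorem not_commute_t_pow_prod (w : ReducedWord G A B) (hw : w.ConjTReduced) {K : ℕ}
    (hK : 0 < K) : ¬Commute (t ^ K) (w.prod φ) := by
  intro hc
  obtain ⟨w', -, hprod, hlen⟩ := w.exists_prod_eq_t_pow_conj (φ := φ) hw K
  rw [hc.eq, mul_inv_cancel_right] at hprod
  have := congrArg List.length (HNNExtension.ReducedWord.map_fst_eq_and_of_prod_eq φ hprod).1
  simp only [List.length_map] at this
  omega

end ReducedWord

variable {d : TransversalPair G A B}

theorem exists_prod_eq_t_mul (w : NormalWord d) {g : G} {L : List (ℤˣ × G)}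
    (hhead : w.head ∈ A) (hL : w.toList = (-1, g) :: L) :
    ∃ w' : NormalWord d, w'.prod φ = t * w.prod φ ∧ w'.toList = L := by
  refine ⟨{ head := φ ⟨w.head, hhead⟩ * g, toList := L, chain := ?_, mem_set := ?_ }, ?_, rfl⟩
  · exact (hL ▸ w.chain).tail
  · exact fun u g' h => w.mem_set u g' (hL ▸ List.mem_cons_of_mem _ h)
  · simp [ReducedWord.prod, hL, equiv_eq_conj, mul_assoc]

theorem exists_prod_mul_t_eq (w : NormalWord d) {L : List (ℤˣ × G)}
    (hL : w.toList = L ++ [(1, 1)]) :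
    ∃ w' : NormalWord d, w'.prod φ * t = w.prod φ ∧ w'.toList = L := by
  refine ⟨{ head := w.head, toList := L, chain := ?_, mem_set := ?_ }, ?_, rfl⟩
  · exact (hL ▸ w.chain).left_of_append
  · exact fun u g' h => w.mem_set u g' (hL ▸ List.mem_append_left _ h)
  · simp [ReducedWord.prod, hL, mul_assoc]

theorem eq_cons_or_eq_append_of_not_conjTReduced (hd : ∀ u, (1 : G) ∈ d.set u)
    (w : NormalWord d) (hne : w.toList ≠ []) (hw : ¬w.ConjTReduced) :
    (w.head ∈ A ∧ ∃ g L, w.toList = (-1, g) :: L) ∨ ∃ L, w.toList = L ++ [(1, 1)] := by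
  by_contra! h
  obtain ⟨hleft, hright⟩ := h
  refine hw ((w.chain.append (List.isChain_singleton _) ?_).cons ?_)
  · rintro ⟨u, g⟩ hlast y hy hg
    simp only [List.head?_cons, Option.mem_some_iff] at hy
    subst hy
    obtain ⟨L, hL⟩ := List.getLast?_eq_some_iff.1 hlast
    rcases Int.units_eq_one_or u with rfl | rfl
    · cases d.eq_one_of_mem (hd 1) hg (w.mem_set 1 g (by simp [hL]))
      exact absurd hL (hright L)
    · rfl
  · rintro ⟨u, g⟩ hp hhead
    rw [List.head?_append_of_ne_nil _ hne] at hp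
    obtain ⟨L, hL⟩ := List.head?_eq_some_iff.1 hp
    rcases Int.units_eq_one_or u with rfl | rfl
    · rfl
    · exact absurd hL (hleft hhead g L)

theorem prod_mem_zpowers_t_of_commute (hd : ∀ u, (1 : G) ∈ d.set u) {K : ℕ} (hK : 0 < K)
    (hG : ∀ g : G, Commute (t ^ K : HNNExtension G A B φ) (of g) → g = 1)
    (w : NormalWord d) (hw : Commute (t ^ K) (w.prod φ)) :
    w.prod φ ∈ Subgroup.zpowers t := by
  induction hn : w.toList.length using Nat.strong_induction_on generalizing w with
  | _ n ih =>
  have htK : Commute (t ^ K : HNNExtension G A B φ) t := (Commute.refl t).pow_left K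
  by_cases hnil : w.toList = []
  · have hprod : w.prod φ = of w.head := by simp [ReducedWord.prod, hnil]
    rw [hprod, hG w.head (hprod ▸ hw), map_one]
    exact one_mem _
  have hw' : ¬w.ConjTReduced := fun hc => w.not_commute_t_pow_prod hc hK hw
  rcases w.eq_cons_or_eq_append_of_not_conjTReduced hd hnil hw' with
    ⟨hhead, g, L, hL⟩ | ⟨L, hL⟩
  · obtain ⟨w', hprod, rfl⟩ := w.exists_prod_eq_t_mul (φ := φ) hhead hL
    have := ih _ (by simp [← hn, hL]) w' (hprod ▸ htK.mul_right hw) rfl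
    rw [hprod] at this
    simpa using mul_mem (inv_mem (Subgroup.mem_zpowers t)) this
  · obtain ⟨w', hprod, rfl⟩ := w.exists_prod_mul_t_eq (φ := φ) hL
    have := ih _ (by simp [← hn, hL]) w' (by simpa [← hprod] using hw.mul_right htK.inv_right) rfl
    rw [← hprod]
    exact mul_mem this (Subgroup.mem_zpowers t)

end NormalWord

theorem mem_zpowers_t_of_conj_t_zpow
    (hG : ∀ K : ℕ, 0 < K → ∀ g : G, Commute (t ^ K : HNNExtension G A B φ) (of g) → g = 1)
    {h : HNNExtension G A B φ} {k l : ℤ} (hk : k ≠ 0) (e : h⁻¹ * t ^ k * h = t ^ l) :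
    h ∈ Subgroup.zpowers t := by
  obtain rfl := eq_of_conj_t_zpow e
  have hc : Commute (t ^ k) h := by
    rw [Commute, SemiconjBy]
    nth_rewrite 2 [← e]
    group
  obtain ⟨K, hK, hKc⟩ : ∃ K : ℕ, 0 < K ∧ Commute (t ^ K) h := by
    obtain ⟨K, rfl | rfl⟩ := Int.eq_nat_or_neg k
    · exact ⟨K, by omega, by simpa using hc⟩
    · exact ⟨K, by omega, by simpa using hc.inv_left⟩
  obtain ⟨d, hd⟩ := NormalWord.exists_transversalPair_one_mem (G := G) (A := A) (B := B)
  have hprod : (NormalWord.equiv φ d h).prod φ = h := (NormalWord.equiv φ d).symm_apply_apply h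
  rw [← hprod] at hKc ⊢
  exact NormalWord.prod_mem_zpowers_t_of_commute hd hK (hG K hK) _ hKc

end HNNExtension

namespace BS

open Multiplicative HNNExtension

variable {m n : ℤ}

theorem t_mul_a_zpow_mul_t_inv (m n : ℤ) : t m n * a m n ^ m * (t m n)⁻¹ = a m n ^ n := by
  have h : t m n * a m n ^ m * (t m n)⁻¹ * (a m n ^ n)⁻¹ = 1 :=
    PresentedGroup.one_of_mem (Set.mem_singleton (bsRel m n))
  exact mul_inv_eq_one.1 h

section Lift

variable {H : Type*} [Group H] (c x : H) (h : x * c ^ m * x⁻¹ = c ^ n)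

noncomputable def lift : BS m n →* H :=
  PresentedGroup.toGroup (f := fun b => bif b then x else c) (by
    rintro _ rfl
    simpa [bsRel] using mul_inv_eq_one.2 h)

@[simp] theorem lift_a : lift c x h (a m n) = c := PresentedGroup.toGroup.of _

@[simp] theorem lift_t : lift c x h (t m n) = x := PresentedGroup.toGroup.of _

end Lift

variable (hm : m ≠ 0) (hn : n ≠ 0)

noncomputable def hnnEquiv :
    (zpowGroupHom m : Multiplicative ℤ →* Multiplicative ℤ).range ≃*
      (zpowGroupHom n : Multiplicative ℤ →* Multiplicative ℤ).range :=
  (MonoidHom.ofInjective (zpow_left_injective (G := Multiplicative ℤ) hm)).symm.trans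
    (MonoidHom.ofInjective (zpow_left_injective (G := Multiplicative ℤ) hn))

theorem exists_zpow_hnnEquiv (z : (zpowGroupHom m : Multiplicative ℤ →* Multiplicative ℤ).range) :
    ∃ y : Multiplicative ℤ, (z : Multiplicative ℤ) = y ^ m ∧ (hnnEquiv hm hn z : _) = y ^ n :=
  ⟨_, (MonoidHom.apply_ofInjective_symm _ z).symm, rfl⟩

/-- `ℤ` is written multiplicatively, so the associated subgroups are `mℤ` and `nℤ`, and
`hnnEquiv` is `mk ↦ nk`. -/
abbrev HNN : Type :=
  HNNExtension (Multiplicative ℤ) (zpowGroupHom m).range (zpowGroupHom n).range (hnnEquiv hm hn)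

namespace HNN

section Lift

variable {H : Type*} [Group H] (c x : H) (h : x * c ^ m * x⁻¹ = c ^ n)

noncomputable def lift : HNN hm hn →* H :=
  HNNExtension.lift (zpowersHom H c) x fun z => by
    obtain ⟨y, hz, hφz⟩ := exists_zpow_hnnEquiv hm hn z
    rw [hz, hφz, map_zpow, map_zpow, zpowersHom_apply, zpow_comm, zpow_comm c _ n, ← h, conj_zpow]
    group

@[simp] theorem lift_of (y : Multiplicative ℤ) : lift hm hn c x h (of y) = c ^ toAdd y :=
  HNNExtension.lift_of ..

@[simp] theorem lift_t : lift hm hn c x h HNNExtension.t = x :=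
  HNNExtension.lift_t ..

end Lift

theorem t_mul_of_zpow_mul_t_inv (c : Multiplicative ℤ) :
    (HNNExtension.t : HNN hm hn) * of c ^ m * HNNExtension.t⁻¹ = of c ^ n := by
  obtain ⟨y, hy, hφy⟩ := exists_zpow_hnnEquiv hm hn ⟨c ^ m, c, rfl⟩
  obtain rfl := zpow_left_injective hm hy.symm
  rw [← map_zpow, ← map_zpow, ← hφy, equiv_eq_conj]

noncomputable def toBS : HNN hm hn →* BS m n :=
  lift hm hn (a m n) (t m n) (t_mul_a_zpow_mul_t_inv m n)

noncomputable def ofBS : BS m n →* HNN hm hn :=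
  BS.lift (of (ofAdd 1)) HNNExtension.t (t_mul_of_zpow_mul_t_inv hm hn _)

theorem toBS_ofBS (g : BS m n) : toBS hm hn (ofBS hm hn g) = g := by
  suffices (toBS hm hn).comp (ofBS hm hn) = MonoidHom.id _ from DFunLike.congr_fun this g
  refine PresentedGroup.ext fun b => ?_
  cases b
  · change toBS hm hn (ofBS hm hn (a m n)) = a m n
    simp [ofBS, toBS]
  · change toBS hm hn (ofBS hm hn (t m n)) = t m n
    simp [ofBS, toBS]

theorem mem_zpowers_t_of_ofBS_mem {g : BS m n}
    (hg : ofBS hm hn g ∈ Subgroup.zpowers HNNExtension.t) : g ∈ Subgroup.zpowers (t m n) := by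
  obtain ⟨s, hs⟩ := Subgroup.mem_zpowers_iff.1 hg
  refine Subgroup.mem_zpowers_iff.2 ⟨s, ?_⟩
  rw [← toBS_ofBS hm hn g, ← hs, map_zpow, toBS, lift_t]

noncomputable def affineRep : HNN hm hn →* Equiv.Perm ℚ :=
  lift hm hn (Equiv.addRight 1) (MulAction.toPermHom ℚˣ ℚ (Units.mk0 (n / m) (by simp [hm, hn])))
    (by ext y; simp; field_simp)

theorem affineRep_t_pow_apply (K : ℕ) (y : ℚ) :
    affineRep hm hn (HNNExtension.t ^ K) y = (n / m) ^ K * y := by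
  rw [map_pow, affineRep, lift_t, ← map_pow]
  simp [Units.smul_def]

theorem affineRep_of_apply (g : Multiplicative ℤ) (y : ℚ) :
    affineRep hm hn (of g) y = y + toAdd g := by
  simp [affineRep]

theorem eq_one_of_commute_t_pow (hmn : |m| ≠ |n|) {K : ℕ} (hK : 0 < K) (g : Multiplicative ℤ)
    (hc : Commute (HNNExtension.t ^ K : HNN hm hn) (of g)) : g = 1 := by
  have h := DFunLike.congr_fun (congrArg (affineRep hm hn) hc.eq) 0
  simp only [map_mul, Equiv.Perm.mul_apply, affineRep_t_pow_apply, affineRep_of_apply] at h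
  have hq : (n / m : ℚ) ^ K ≠ 1 := by
    intro hq
    have h1 : |(n / m : ℚ)| = 1 :=
      (pow_eq_one_iff_of_nonneg (abs_nonneg _) hK.ne').1 (by rw [← abs_pow, hq, abs_one])
    rw [abs_div, div_eq_one_iff_eq (by positivity)] at h1
    exact hmn (by exact_mod_cast h1.symm)
  have h0 : ((n / m : ℚ) ^ K - 1) * toAdd g = 0 := by linear_combination h
  have := (mul_eq_zero.1 h0).resolve_left (sub_ne_zero.2 hq)
  exact toAdd_eq_zero.1 (by exact_mod_cast this)

end HNN

end BS

/-- For `|m| ≠ |n|` (both nonzero), the cyclic subgroup `⟨t⟩` of `BS(m,n)`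
is malnormal: if `g⟨t⟩g⁻¹ ∩ ⟨t⟩` contains a nontrivial element, then `g ∈ ⟨t⟩`. -/
theorem zpowers_t_malnormal (m n : ℤ) (hm : m ≠ 0) (hn : n ≠ 0) (hmn : |m| ≠ |n|) :
    ∀ g : BS m n,
      (∃ x : BS m n, x ≠ 1 ∧ x ∈ Subgroup.zpowers (BS.t m n) ∧
        g⁻¹ * x * g ∈ Subgroup.zpowers (BS.t m n)) →
      g ∈ Subgroup.zpowers (BS.t m n) := by
  rintro g ⟨x, hx1, hx, hconj⟩
  obtain ⟨k, rfl⟩ := Subgroup.mem_zpowers_iff.1 hx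
  obtain ⟨l, hl⟩ := Subgroup.mem_zpowers_iff.1 hconj
  have hk : k ≠ 0 := by
    rintro rfl
    exact hx1 (zpow_zero _)
  have e : (BS.HNN.ofBS hm hn g)⁻¹ * HNNExtension.t ^ k * BS.HNN.ofBS hm hn g =
      HNNExtension.t ^ l := by
    simpa [BS.HNN.ofBS] using congrArg (BS.HNN.ofBS hm hn) hl.symm
  exact BS.HNN.mem_zpowers_t_of_ofBS_mem hm hn <| HNNExtension.mem_zpowers_t_of_conj_t_zpow
    (fun K hK => BS.HNN.eq_one_of_commute_t_pow hm hn hmn hK) hk e
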